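/- Define σ(x) = (1 − 2x − √((6x+1)(1−2x)))/4 for x ∈ (−1/6, 1/3). Then σ is an involution on (−1/6, 1/3) with σ(0) = 0, and A(σ(x)) = A(x) for all x in this interval, where A(x) = x²/2 − x³. -/

import Mathlib

/-!
σ(x) is the smaller root `y` of `y² + x y + x² = (x + y)/2`, which is the relation
`A y = A x` with the trivial factor `y - x` divided out. The relation is symmetric in `x` and
`y`, so `x` is a root of the equation for `σ(x)`; it is the smaller one exactly when
`6x - 1 ≤ √((6x+1)(1-2x))`, which holds for `x ≤ 1/3`. This gives `σ(σ(x)) = x`.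
-/

open Set

namespace SigmaInvolution

noncomputable def sigma (x : ℝ) : ℝ := (1 - 2 * x - √((6 * x + 1) * (1 - 2 * x))) / 4

lemma sq_sqrt_disc {x : ℝ} (hx : x ∈ Icc (-(1:ℝ)/6) (1/2)) :
    √((6 * x + 1) * (1 - 2 * x)) ^ 2 = (6 * x + 1) * (1 - 2 * x) :=
  Real.sq_sqrt (mul_nonneg (by linarith [hx.1]) (by linarith [hx.2]))

lemma sigma_quadratic {x : ℝ} (hx : x ∈ Icc (-(1:ℝ)/6) (1/2)) :
    sigma x ^ 2 + x * sigma x + x ^ 2 = (x + sigma x) / 2 := by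
  unfold sigma
  linear_combination sq_sqrt_disc hx / 16

lemma sigma_eq_of_quadratic {y z : ℝ} (hy : y ∈ Icc (-(1:ℝ)/6) (1/2))
    (h : z ^ 2 + y * z + y ^ 2 = (y + z) / 2) (hz : 4 * z ≤ 1 - 2 * y) : sigma y = z := by
  have hsqrt : √((6 * y + 1) * (1 - 2 * y)) = 1 - 2 * y - 4 * z :=
    (Real.sqrt_eq_iff_eq_sq (mul_nonneg (by linarith [hy.1]) (by linarith [hy.2]))
      (by linarith)).2 (by linear_combination -16 * h)
  rw [sigma, hsqrt]
  ring

lemma cubic_eq_of_quadratic {x y : ℝ} (h : y ^ 2 + x * y + x ^ 2 = (x + y) / 2) :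
    y ^ 2 / 2 - y ^ 3 = x ^ 2 / 2 - x ^ 3 := by
  linear_combination (x - y) * h

lemma six_mul_sub_one_le_sqrt {x : ℝ} (hx : x ∈ Icc (-(1:ℝ)/6) (1/3)) :
    6 * x - 1 ≤ √((6 * x + 1) * (1 - 2 * x)) := by
  rcases le_or_gt (6 * x - 1) 0 with hneg | hpos
  · exact hneg.trans (Real.sqrt_nonneg _)
  · exact (Real.le_sqrt' hpos).2 (by nlinarith [hx.2])

lemma sigma_mem_Ioo {x : ℝ} (hx : x ∈ Ioo (-(1:ℝ)/6) (1/3)) :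
    sigma x ∈ Ioo (-(1:ℝ)/6) (1/3) := by
  obtain ⟨hlo, hhi⟩ := hx
  have hupper : √((6 * x + 1) * (1 - 2 * x)) < 5 / 3 - 2 * x :=
    (Real.sqrt_lt' (by linarith)).2 (by nlinarith [sq_pos_of_pos (sub_pos.2 hhi)])
  have hlower := Real.sqrt_nonneg ((6 * x + 1) * (1 - 2 * x))
  constructor <;> unfold sigma <;> linarith

lemma sigma_sigma {x : ℝ} (hx : x ∈ Ioo (-(1:ℝ)/6) (1/3)) : sigma (sigma x) = x := by
  have hxI : x ∈ Icc (-(1:ℝ)/6) (1/2) := ⟨hx.1.le, by linarith [hx.2]⟩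
  have hσ := sigma_mem_Ioo hx
  refine sigma_eq_of_quadratic ⟨hσ.1.le, by linarith [hσ.2]⟩ ?_ ?_
  · linear_combination sigma_quadratic hxI
  · have := six_mul_sub_one_le_sqrt ⟨hx.1.le, hx.2.le⟩
    unfold sigma
    linarith

end SigmaInvolution

open SigmaInvolution in
theorem sigma_involution :
    (∀ x ∈ Set.Ioo (-(1:ℝ)/6) (1/3),
      (1 - 2 * x - Real.sqrt ((6 * x + 1) * (1 - 2 * x))) / 4 ∈ Set.Ioo (-(1:ℝ)/6) (1/3)) ∧
    ((1 - 2 * (0:ℝ) - Real.sqrt ((6 * 0 + 1) * (1 - 2 * 0))) / 4 = 0) ∧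
    (∀ x ∈ Set.Ioo (-(1:ℝ)/6) (1/3),
      (1 - 2 * ((1 - 2 * x - Real.sqrt ((6 * x + 1) * (1 - 2 * x))) / 4) -
        Real.sqrt ((6 * ((1 - 2 * x - Real.sqrt ((6 * x + 1) * (1 - 2 * x))) / 4) + 1) *
          (1 - 2 * ((1 - 2 * x - Real.sqrt ((6 * x + 1) * (1 - 2 * x))) / 4)))) / 4 = x) ∧
    (∀ x ∈ Set.Ioo (-(1:ℝ)/6) (1/3),
      ((1 - 2 * x - Real.sqrt ((6 * x + 1) * (1 - 2 * x))) / 4) ^ 2 / 2 -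
        ((1 - 2 * x - Real.sqrt ((6 * x + 1) * (1 - 2 * x))) / 4) ^ 3 =
      x ^ 2 / 2 - x ^ 3) :=
  ⟨fun _ hx => sigma_mem_Ioo hx,
   by norm_num,
   fun _ hx => sigma_sigma hx,
   fun _ hx => cubic_eq_of_quadratic (sigma_quadratic ⟨hx.1.le, by linarith [hx.2]⟩)⟩
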